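/- arXiv:1811.01083 — 2 statements merged into one kernel-verified Lean document; each statement's English description precedes it below -/
import Mathlib

section
/- δ^(k)(x) * δ^(l)(x) = 0 for all k, l ∈ ℕ₀. -/
open MeasureTheory Filter Topology Set

noncomputable section

/-- Distributions, modelled as functionals; distributional identities are
tested against smooth compactly supported test functions via `dEq`. -/
abbrev SDist : Type := (ℝ → ℂ) → ℂ

/-- Test functions: smooth and compactly supported. -/
def IsTest (t : ℝ → ℂ) : Prop := ContDiff ℝ (⊤ : ℕ∞) t ∧ HasCompactSupport t

/-- The regular distribution associated to a function. -/
def ofFun (f : ℝ → ℂ) : SDist := fun t => ∫ x, f x * t x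

/-- Distributional derivative. -/
def Dop (F : SDist) : SDist := fun t => - F (deriv t)

/-- Iterated distributional derivative. -/
def Dn (n : ℕ) (F : SDist) : SDist := Dop^[n] F

/-- `deltaD n x₀` is the n-th derivative of the Dirac delta at `x₀`. -/
def deltaD (n : ℕ) (x₀ : ℝ) : SDist := fun t => (-1 : ℂ) ^ n * iteratedDeriv n t x₀

/-- Equality of distributions (tested on test functions). -/
def dEq (F G : SDist) : Prop := ∀ t, IsTest t → F t = G t

/-- Equality of (restrictions of) distributions on a set Ω. -/
def dEqOn (Ω : Set ℝ) (F G : SDist) : Prop :=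
  ∀ t, IsTest t → tsupport t ⊆ Ω → F t = G t

/-- Dual product of a distribution by a smooth function. -/
def mulSmooth (f : ℝ → ℂ) (F : SDist) : SDist := fun t => F (fun x => f x * t x)

/-- `shift ε F` is the distribution `F(· + ε)`. -/
def shift (ε : ℝ) (F : SDist) : SDist := fun t => F (fun x => t (x - ε))

/-- The Hörmander product of distributions with disjoint singular supports:
`P` is the product of `F` and `G` iff near every point one of the factors is
(given by) a smooth function and `P` is locally the corresponding dual product. -/
def IsHProd (F G P : SDist) : Prop :=
  ∀ x : ℝ, ∃ Ω : Set ℝ, IsOpen Ω ∧ x ∈ Ω ∧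
    ((∃ f, ContDiff ℝ (⊤ : ℕ∞) f ∧ dEqOn Ω F (ofFun f) ∧ dEqOn Ω P (mulSmooth f G)) ∨
     (∃ g, ContDiff ℝ (⊤ : ℕ∞) g ∧ dEqOn Ω G (ofFun g) ∧ dEqOn Ω P (mulSmooth g F)))

/-- The product `*` of the paper: `P = F * G` iff
`P = lim_{ε↓0} F(x)·G(x+ε)` in the distributional sense, where `·` is the
Hörmander product. -/
def IsStar (F G P : SDist) : Prop :=
  ∃ Q : ℝ → SDist,
    (∀ᶠ ε in 𝓝[>] (0 : ℝ), IsHProd F (shift ε G) (Q ε)) ∧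
    ∀ t, IsTest t → Tendsto (fun ε => Q ε t) (𝓝[>] (0 : ℝ)) (𝓝 (P t))

/-- Piecewise smooth functions: smooth off a finite set, with finite lateral
limits of all derivatives at the exceptional points. -/
def PiecewiseSmooth (f : ℝ → ℂ) : Prop :=
  ∃ I : Finset ℝ, ContDiffOn ℝ (⊤ : ℕ∞) f ((I : Set ℝ)ᶜ) ∧
    ∀ x₀ ∈ I, ∀ j : ℕ,
      (∃ l, Tendsto (iteratedDeriv j f) (𝓝[<] x₀) (𝓝 l)) ∧
      (∃ l, Tendsto (iteratedDeriv j f) (𝓝[>] x₀) (𝓝 l))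

/-- The space 𝒜: piecewise smooth functions together with all their
distributional derivatives. -/
def memA (F : SDist) : Prop :=
  ∃ (f : ℝ → ℂ) (k : ℕ), PiecewiseSmooth f ∧ dEq F (Dn k (ofFun f))

/-- Heaviside step function. -/
def Heav : ℝ → ℂ := fun x => if 0 < x then 1 else 0

/-- `H₋ = 1 - H`. -/
def HeavM : ℝ → ℂ := fun x => 1 - Heav x

/-- The open cell `Ω_i = (x_i, x_{i+1})` (with `x_0 = -∞`, `x_{m+1} = +∞`)
determined by the points `x 0 < … < x (m-1)`. -/
def cell (m : ℕ) (x : Fin m → ℝ) (i : Fin (m + 1)) : Set ℝ :=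
  {y | (∀ j : Fin m, (j : ℕ) < (i : ℕ) → x j < y) ∧
       ∀ j : Fin m, (i : ℕ) ≤ (j : ℕ) → y < x j}

/-- The distribution `Σᵢ fᵢ χ_{Ωᵢ} + Σᵢⱼ cᵢⱼ δ^{(j)}(x - xᵢ)`. -/
def repDist (m n : ℕ) (x : Fin m → ℝ) (f : Fin (m + 1) → ℝ → ℂ)
    (c : Fin m → Fin (n + 1) → ℂ) : SDist :=
  fun t => (∑ i : Fin (m + 1), ofFun ((cell m x i).indicator (f i)) t)
    + ∑ i : Fin m, ∑ j : Fin (n + 1), c i j * deltaD (j : ℕ) (x i) t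

/-- `G = D̃_I F`, the modified derivative `D̃_I F = DF + Σ_{x₀∈I} (F*δ_{x₀} − δ_{x₀}*F)`. -/
def IsDtilde (I : Finset ℝ) (F G : SDist) : Prop :=
  ∃ P Q : ℝ → SDist,
    (∀ x₀ ∈ I, IsStar F (deltaD 0 x₀) (P x₀) ∧ IsStar (deltaD 0 x₀) F (Q x₀)) ∧
    dEq G (fun t => Dop F t + ∑ x₀ ∈ I, (P x₀ t - Q x₀ t))

/-- `G = D̃_I^k F`, the k-th iterate of the modified derivative. -/
def IsDtildeN (I : Finset ℝ) : ℕ → SDist → SDist → Prop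
  | 0, F, G => dEq F G
  | k + 1, F, G => ∃ M, IsDtildeN I k F M ∧ IsDtilde I M G

/-- `G = Γ̂^{(j)} F = F*δ^{(j)} − δ^{(j)}*F`. -/
def IsGammaN (j : ℕ) (F G : SDist) : Prop :=
  ∃ P Q, IsStar F (deltaD j 0) P ∧ IsStar (deltaD j 0) F Q ∧
    dEq G (fun t => P t - Q t)

/-- `Fh = F̂ ψ`, the interface operator
`F̂ψ = Σ_{i<m,j<n} (A_{ij} D^i δ̂₋ D^j − B_{ij} D^i δ̂₊ D^j) ψ`,
where `δ̂₋ G = G*δ` and `δ̂₊ G = δ*G`. -/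
def IsFhat (m n : ℕ) (A B : Fin m → Fin n → ℂ) (ψ Fh : SDist) : Prop :=
  ∃ P Q : Fin n → SDist,
    (∀ j : Fin n, IsStar (Dn (j : ℕ) ψ) (deltaD 0 0) (P j) ∧
      IsStar (deltaD 0 0) (Dn (j : ℕ) ψ) (Q j)) ∧
    dEq Fh (fun t => ∑ i : Fin m, ∑ j : Fin n,
      (A i j * Dn (i : ℕ) (P j) t - B i j * Dn (i : ℕ) (Q j) t))

/-- `g` is the family of L² representatives of the distributional derivatives of
`ψ` up to order `n`; this expresses `ψ ∈ W₂ⁿ(ℝ)`. -/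
def SobRep (n : ℕ) (ψ : ℝ → ℂ) (g : ℕ → ℝ → ℂ) : Prop :=
  g 0 = ψ ∧ ∀ i ≤ n, MemLp (g i) 2 volume ∧ dEq (Dn i (ofFun ψ)) (ofFun (g i))

/-! The supports `{a}` of `δ^{(k)}_a` and `{b}` of `δ^{(l)}_b` are disjoint when `a ≠ b`, so near every
point one factor vanishes and their Hörmander product is `0`. Shifting `δ^{(l)}` by `ε > 0` moves its
support to `{-ε}`, hence every product `δ^{(k)}(x) · δ^{(l)}(x + ε)` is `0`, and so is its limit. -/

theorem iteratedDeriv_eq_zero_of_notMem_tsupport {𝕜 F : Type*} [NontriviallyNormedField 𝕜]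
    [NormedAddCommGroup F] [NormedSpace 𝕜 F] {f : 𝕜 → F} {x : 𝕜} (hx : x ∉ tsupport f) (n : ℕ) :
    iteratedDeriv n f x = 0 := by
  rw [iteratedDeriv_eq_iteratedFDeriv,
    Function.notMem_support.mp fun h => hx (support_iteratedFDeriv_subset n h),
    zero_apply]

theorem ofFun_zero : ofFun 0 = 0 := by
  ext t
  simp [ofFun]

theorem mulSmooth_zero_deltaD (n : ℕ) (a : ℝ) : mulSmooth 0 (deltaD n a) = 0 := by
  ext t
  simp [mulSmooth, deltaD]

theorem shift_deltaD (ε : ℝ) (n : ℕ) (a : ℝ) : shift ε (deltaD n a) = deltaD n (a - ε) := by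
  ext t
  simp only [shift, deltaD, iteratedDeriv_comp_sub_const]

theorem dEqOn_deltaD_zero {Ω : Set ℝ} {a : ℝ} (ha : a ∉ Ω) (n : ℕ) : dEqOn Ω (deltaD n a) 0 := by
  intro t _ hΩ
  simp [deltaD, iteratedDeriv_eq_zero_of_notMem_tsupport fun h => ha (hΩ h)]

theorem isHProd_deltaD_deltaD_zero {a b : ℝ} (hab : a ≠ b) (k l : ℕ) :
    IsHProd (deltaD k a) (deltaD l b) 0 := by
  intro x
  by_cases hxa : x = a
  · refine ⟨{b}ᶜ, isOpen_compl_singleton, hxa ▸ hab, Or.inr ⟨0, contDiff_const, ?_, ?_⟩⟩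
    · rw [ofFun_zero]
      exact dEqOn_deltaD_zero (notMem_compl_iff.mpr (mem_singleton b)) l
    · rw [mulSmooth_zero_deltaD]
      exact fun _ _ _ => rfl
  · refine ⟨{a}ᶜ, isOpen_compl_singleton, hxa, Or.inl ⟨0, contDiff_const, ?_, ?_⟩⟩
    · rw [ofFun_zero]
      exact dEqOn_deltaD_zero (notMem_compl_iff.mpr (mem_singleton a)) k
    · rw [mulSmooth_zero_deltaD]
      exact fun _ _ _ => rfl

/-- δ^(k)(x) * δ^(l)(x) = 0 for all k, l ∈ ℕ₀. -/
theorem delta_star_delta (k l : ℕ) :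
    IsStar (deltaD k 0) (deltaD l 0) (0 : SDist) := by
  refine ⟨fun _ => 0, ?_, fun t _ => tendsto_const_nhds⟩
  filter_upwards [self_mem_nhdsWithin] with ε (hε : 0 < ε)
  rw [shift_deltaD]
  exact isHProd_deltaD_deltaD_zero (by linarith) k l
end
end

section
/- δ(x) * (−1/2 + H(x)) = (1/2) δ(x). In particular, the * product of an even distribution by an odd distribution can be even. -/
open MeasureTheory Filter Topology Set

noncomputable section

/-! For every `ε > 0` the shifted factor `-1/2 + H(x + ε)` equals the constant `1/2` on
`(-ε, ∞)`, a neighbourhood of the support of `δ`, while away from `0` the factor `δ` vanishes.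
So the Hörmander product `δ · (-1/2 + H(· + ε))` is already `(1/2) δ` for each `ε`, and the
limit `ε ↓ 0` is that of a constant family. -/

theorem deltaD_zero_apply (x₀ : ℝ) (t : ℝ → ℂ) : deltaD 0 x₀ t = t x₀ := by
  simp [deltaD]

theorem shift_ofFun (ε : ℝ) (f : ℝ → ℂ) :
    shift ε (ofFun f) = ofFun (fun x => f (x + ε)) := by
  funext t
  simpa [shift, ofFun] using integral_sub_right_eq_self (fun x => f (x + ε) * t x) ε

theorem dEqOn_ofFun_of_eqOn {Ω : Set ℝ} {f g : ℝ → ℂ} (hfg : EqOn f g Ω) :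
    dEqOn Ω (ofFun f) (ofFun g) := by
  intro t _ htΩ
  refine integral_congr_ae (Eventually.of_forall fun x => ?_)
  by_cases hx : x ∈ tsupport t
  · simp only [hfg (htΩ hx)]
  · simp [image_eq_zero_of_notMem_tsupport hx]

theorem dEqOn_deltaD_zero_compl (x₀ : ℝ) :
    dEqOn {x₀}ᶜ (deltaD 0 x₀) (ofFun fun _ => 0) := by
  intro t _ htΩ
  have hx₀ : x₀ ∉ tsupport t := fun h => htΩ h rfl
  simp [deltaD_zero_apply, image_eq_zero_of_notMem_tsupport hx₀, ofFun]

theorem isHProd_deltaD_zero_ofFun_of_eqOn_const {x₀ : ℝ} {c : ℂ} {U : Set ℝ} {g : ℝ → ℂ}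
    (hU : IsOpen U) (hx₀ : x₀ ∈ U) (hg : EqOn g (fun _ => c) U) :
    IsHProd (deltaD 0 x₀) (ofFun g) (fun t => c * deltaD 0 x₀ t) := by
  intro x
  by_cases hx : x ∈ U
  · refine ⟨U, hU, hx, Or.inr ⟨fun _ => c, contDiff_const, dEqOn_ofFun_of_eqOn hg, ?_⟩⟩
    intro t _ _
    simp only [mulSmooth, deltaD_zero_apply]
  · have hxx₀ : x ∈ ({x₀}ᶜ : Set ℝ) := fun h => hx (h ▸ hx₀)
    refine ⟨{x₀}ᶜ, isOpen_compl_singleton, hxx₀,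
      Or.inl ⟨fun _ => 0, contDiff_const, dEqOn_deltaD_zero_compl x₀, ?_⟩⟩
    intro t ht htΩ
    simp only [dEqOn_deltaD_zero_compl x₀ t ht htΩ]
    simp [mulSmooth, ofFun]

theorem isStar_of_eventually_isHProd {F G P : SDist}
    (h : ∀ᶠ ε in 𝓝[>] (0 : ℝ), IsHProd F (shift ε G) P) : IsStar F G P :=
  ⟨fun _ => P, h, fun _ _ => tendsto_const_nhds⟩

/-- δ(x) * (−1/2 + H(x)) = (1/2) δ(x). -/
theorem delta_star_shifted_heaviside :
    IsStar (deltaD 0 0) (ofFun (fun x => -(1/2 : ℂ) + Heav x))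
      (fun t => (1/2 : ℂ) * deltaD 0 0 t) := by
  refine isStar_of_eventually_isHProd ?_
  filter_upwards [self_mem_nhdsWithin] with ε (hε : 0 < ε)
  rw [shift_ofFun]
  refine isHProd_deltaD_zero_ofFun_of_eqOn_const isOpen_Ioi (neg_lt_zero.mpr hε) ?_
  intro x (hx : -ε < x)
  have : 0 < x + ε := by linarith
  simp only [Heav, if_pos this]
  norm_num
end
end
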